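/- For integers $100 \le k \le n/2$, we have $\binom{k}{k/2}\binom{n}{k/8}\left(\frac{k}{8}\left(\frac1n + \frac1{n^3}\right)\right)^{k/2} \le (1.5 k/n)^{3k/8}$, where $k$ is divisible by $8$. -/

import Mathlib

/-!
Write `k = 8m`. Bounding `C(8m, 4m) ≤ 2^(8m)`, `C(n, m) ≤ (e n / m)^m` and, since `n ≥ 16`,
`1/n + 1/n³ ≤ 1.1/n`, the left side is at most `(256 · e · 1.1⁴ · (m/n)³)^m`, and
`256 · e · 1.1⁴ ≈ 1019 ≤ 1728 = 12³`.
-/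

open Real

theorem Nat.choose_le_exp_one_mul_div_pow (n m : ℕ) :
    (n.choose m : ℝ) ≤ (exp 1 * n / m) ^ m := by
  rcases Nat.eq_zero_or_pos m with rfl | hm
  · simp
  have hm' : (0 : ℝ) < m := by exact_mod_cast hm
  have hfac : (0 : ℝ) < m.factorial := by exact_mod_cast m.factorial_pos
  have hpow_le : (m : ℝ) ^ m ≤ exp 1 ^ m * m.factorial := by
    rw [← exp_nat_mul, mul_one, ← div_le_iff₀ hfac]
    exact pow_div_factorial_le_exp _ hm'.le m
  calc (n.choose m : ℝ) ≤ (n : ℝ) ^ m / m.factorial := Nat.choose_le_pow_div m n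
    _ ≤ (n : ℝ) ^ m * exp 1 ^ m / (m : ℝ) ^ m := by
      rw [div_le_div_iff₀ hfac (by positivity), mul_assoc]
      exact mul_le_mul_of_nonneg_left hpow_le (by positivity)
    _ = (exp 1 * n / m) ^ m := by rw [div_pow, mul_pow, mul_comm]

theorem mul_one_div_add_one_div_pow_three_le {m x : ℝ} (hm : 0 ≤ m) (hx : 4 ≤ x) :
    m * (1 / x + 1 / x ^ 3) ≤ 1.1 * m / x := by
  have hx0 : 0 < x := by linarith
  have hsum : 1 / x + 1 / x ^ 3 ≤ 1.1 / x := by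
    rw [div_add_div _ _ hx0.ne' (by positivity), div_le_div_iff₀ (by positivity) hx0]
    nlinarith [mul_le_mul hx hx (by norm_num) hx0.le]
  calc m * (1 / x + 1 / x ^ 3) ≤ m * (1.1 / x) := mul_le_mul_of_nonneg_left hsum hm
    _ = 1.1 * m / x := by ring

theorem mul_exp_one_mul_pow_four_le_pow_three {m x : ℝ} (hm : 0 < m) (hx : 0 < x) :
    256 * (exp 1 * x / m) * (1.1 * m / x) ^ 4 ≤ (12 * m / x) ^ 3 := by
  have he : exp 1 < 2.7182818286 := exp_one_lt_d9
  have hlhs : 256 * (exp 1 * x / m) * (1.1 * m / x) ^ 4 = 374.8096 * exp 1 * (m / x) ^ 3 := by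
    field_simp; ring
  rw [hlhs, show (12 * m / x) ^ 3 = 1728 * (m / x) ^ 3 by ring]
  gcongr
  linarith

theorem stmt_17_general (n k : ℕ) (hk : 2 * k ≤ n) (h8 : 8 ∣ k) :
    (k.choose (k / 2) : ℝ) * (n.choose (k / 8)) *
        ((k : ℝ) / 8 * (1 / n + 1 / (n : ℝ) ^ 3)) ^ (k / 2)
      ≤ (1.5 * k / n) ^ (3 * k / 8) := by
  obtain ⟨m, rfl⟩ := h8
  rcases Nat.eq_zero_or_pos m with rfl | hm
  · simp
  rw [show 8 * m / 2 = 4 * m by omega, show 8 * m / 8 = m by omega,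
    show 3 * (8 * m) / 8 = 3 * m by omega, Nat.cast_mul, Nat.cast_ofNat,
    mul_div_cancel_left₀ _ (by norm_num : (8 : ℝ) ≠ 0)]
  have hm' : (0 : ℝ) < m := by exact_mod_cast hm
  have hn : (16 : ℝ) ≤ n := by exact_mod_cast (show 16 ≤ n by omega)
  have hcentral : ((8 * m).choose (4 * m) : ℝ) ≤ 256 ^ m := by
    rw [show (256 : ℝ) = 2 ^ 8 by norm_num, ← pow_mul]
    exact_mod_cast Nat.choose_le_two_pow _ _
  calc ((8 * m).choose (4 * m) : ℝ) * n.choose m * ((m : ℝ) * (1 / n + 1 / (n : ℝ) ^ 3)) ^ (4 * m)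
      ≤ 256 ^ m * (exp 1 * n / m) ^ m * (1.1 * m / n) ^ (4 * m) := by
        gcongr
        · exact Nat.choose_le_exp_one_mul_div_pow n m
        · exact mul_one_div_add_one_div_pow_three_le hm'.le (by linarith)
    _ = (256 * (exp 1 * n / m) * (1.1 * m / n) ^ 4) ^ m := by
        rw [mul_pow, mul_pow, ← pow_mul]
    _ ≤ ((12 * m / n) ^ 3) ^ m := by
        gcongr
        exact mul_exp_one_mul_pow_four_le_pow_three hm' (by linarith)
    _ = (1.5 * (8 * m : ℝ) / n) ^ (3 * m) := by
        rw [← pow_mul]; ring_nf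

/-- Counting estimate: for `100 ≤ k ≤ n/2` with `8 ∣ k`,
`C(k, k/2) C(n, k/8) (k/8 (1/n + 1/n³))^{k/2} ≤ (1.5 k/n)^{3k/8}`. -/
theorem stmt_17 (n k : ℕ) (h100 : 100 ≤ k) (hk : 2 * k ≤ n) (h8 : 8 ∣ k) :
    (k.choose (k / 2) : ℝ) * (n.choose (k / 8)) *
        ((k : ℝ) / 8 * (1 / n + 1 / (n : ℝ) ^ 3)) ^ (k / 2)
      ≤ (1.5 * k / n) ^ (3 * k / 8) :=
  stmt_17_general n k hk h8
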